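/- arXiv:1211.0463 — 2 statements merged into one kernel-verified Lean document; each statement's English description precedes it below -/
import Mathlib

section
/- Let G be a finite simple graph with minimum degree δ, maximum degree Δ, and girth at least 5. If δ > log_2(e·(Δ² − Δ + 1)), where e is Euler's number, then χ_σ^t(G) ≤ 2: for every linear order on the disjoint union V(G) ∪ E(G) there exists a total weighting w : V(G) ∪ E(G) → {1,2} whose induced total sequence colouring of the vertices is proper. -/
/-!
Common definitions: total sequence colourings induced by a total weighting and a linear
order on the disjoint union `V(G) ⊕ E(G)` of a finite simple graph.
-/

open Finset

variable {V : Type*}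

/-- The elements of `V(G) ⊕ E(G)` relevant to the vertex `v` (namely `v` itself together
with the edges incident to `v`), sorted in increasing order with respect to the linear
order `σ` on `V(G) ⊕ E(G)`. -/
noncomputable def incTotal [Fintype V] [DecidableEq V] (G : SimpleGraph V) [DecidableRel G.Adj]
    (σ : LinearOrder (V ⊕ G.edgeSet)) (v : V) : List (V ⊕ G.edgeSet) :=
  letI := σ
  letI : DecidablePred (fun x : V ⊕ G.edgeSet =>
      Sum.elim (fun u : V => u = v) (fun e : G.edgeSet => v ∈ (e : Sym2 V)) x) :=
    Classical.decPred _
  ((Finset.univ : Finset (V ⊕ G.edgeSet)).filter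
    (fun x : V ⊕ G.edgeSet =>
      Sum.elim (fun u : V => u = v) (fun e : G.edgeSet => v ∈ (e : Sym2 V)) x)).sort σ.le

/-- The induced total sequence colouring: `c(v)` consists of `w(v)` together with the
weights `w(e)` of the edges `e` incident to `v`, all written in increasing order with
respect to `σ`. -/
noncomputable def totalSeqColor [Fintype V] [DecidableEq V] (G : SimpleGraph V)
    [DecidableRel G.Adj] (σ : LinearOrder (V ⊕ G.edgeSet)) (w : V ⊕ G.edgeSet → ℝ) (v : V) :
    List ℝ :=
  (incTotal G σ v).map w

/-- The induced total sequence colouring is proper: adjacent vertices receive distinct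
sequences. -/
def ProperTotalSeq [Fintype V] [DecidableEq V] (G : SimpleGraph V) [DecidableRel G.Adj]
    (σ : LinearOrder (V ⊕ G.edgeSet)) (w : V ⊕ G.edgeSet → ℝ) : Prop :=
  ∀ u v : V, G.Adj u v → totalSeqColor G σ w u ≠ totalSeqColor G σ w v

/-!
Weight the elements of `V(G) ⊕ E(G)` by `1` or `2` uniformly at random and, orienting each edge
`uv` arbitrarily, let `A_uv` be the event `c(u) = c(v)`. Since `c(u)` lists the weights of `u`
and of all its edges in a fixed order, once every weight except those of `u` and of its edges
other than `uv` is fixed, `c(v)` is determined and at most one of the `2 ^ deg u` ways to fill in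
the rest makes `c(u) = c(v)`. Hence `A_uv` has probability at most `2 ^ (-δ)` conditioned on any
event determined by the other coordinates, which includes every `A_e` with `e` avoiding `u` and
`N(u) \ {v}`. Each `A_uv` thus depends on at most `(Δ - 1)Δ + 1` events, and the lopsided
symmetric local lemma applies because `e · 2 ^ (-δ) · (Δ² - Δ + 1) < 1`.
-/

section LocalLemma

variable {Ω ι : Type*} [Fintype Ω] [DecidableEq Ω] (A : ι → Finset Ω)

def avoiding (S : Finset ι) : Finset Ω := univ.filter fun ω => ∀ j ∈ S, ω ∉ A j

@[simp]
lemma avoiding_empty : avoiding A ∅ = univ := by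
  simp [avoiding]

lemma avoiding_anti {S T : Finset ι} (h : S ⊆ T) : avoiding A T ⊆ avoiding A S := by
  intro ω
  simp only [avoiding, mem_filter, mem_univ, true_and]
  exact fun hω j hj => hω j (h hj)

variable [DecidableEq ι]

lemma avoiding_insert (i : ι) (S : Finset ι) :
    avoiding A (insert i S) = avoiding A S \ A i := by
  ext ω
  simp [avoiding, and_comm]

lemma card_avoiding_insert (i : ι) (S : Finset ι) :
    (#(avoiding A (insert i S)) : ℝ) = #(avoiding A S) - #(A i ∩ avoiding A S) := by
  rw [avoiding_insert, inter_comm, eq_sub_iff_add_eq]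
  exact_mod_cast card_sdiff_add_card_inter _ _

lemma one_sub_pow_mul_card_avoiding_le {x : ℝ} (hx : x ≤ 1) {S₀ T : Finset ι}
    (hdisj : Disjoint S₀ T)
    (h : ∀ a ∈ T, ∀ T' ⊆ T, a ∉ T' →
      (#(A a ∩ avoiding A (S₀ ∪ T')) : ℝ) ≤ x * #(avoiding A (S₀ ∪ T'))) :
    (1 - x) ^ #T * #(avoiding A S₀) ≤ #(avoiding A (S₀ ∪ T)) := by
  induction T using Finset.induction_on with
  | empty => simp
  | insert a T ha ih =>
    rw [disjoint_insert_right] at hdisj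
    have hT := ih hdisj.2 fun b hb T' hT' => h b (mem_insert_of_mem hb) T' (hT'.trans
      (subset_insert a T))
    have ha' := h a (mem_insert_self a T) T (subset_insert a T) ha
    rw [card_insert_of_notMem ha, union_insert, card_avoiding_insert, pow_succ']
    calc (1 - x) * (1 - x) ^ #T * #(avoiding A S₀)
        ≤ (1 - x) * #(avoiding A (S₀ ∪ T)) := by
          rw [mul_assoc]; exact mul_le_mul_of_nonneg_left hT (by linarith)
      _ ≤ _ := by linarith

lemma card_inter_avoiding_le (Γ : ι → Finset ι) (hΓ : ∀ i, i ∈ Γ i) {D : ℕ}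
    (hD : ∀ i, #(Γ i) ≤ D + 1) {p x : ℝ} (hx₀ : 0 ≤ x) (hx₁ : x ≤ 1)
    (hp : p ≤ x * (1 - x) ^ D)
    (hcond : ∀ i S, Disjoint S (Γ i) →
      (#(A i ∩ avoiding A S) : ℝ) ≤ p * #(avoiding A S))
    (S : Finset ι) {i : ι} (hi : i ∉ S) :
    (#(A i ∩ avoiding A S) : ℝ) ≤ x * #(avoiding A S) := by
  induction S using Finset.strongInduction generalizing i with
  | H S ih =>
    have hT : #(S ∩ Γ i) ≤ D := calc
      #(S ∩ Γ i) ≤ #((Γ i).erase i) := card_le_card fun a ha =>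
        mem_erase.2 ⟨ne_of_mem_of_not_mem (mem_inter.1 ha).1 hi, (mem_inter.1 ha).2⟩
      _ = #(Γ i) - 1 := card_erase_of_mem (hΓ i)
      _ ≤ D := tsub_le_iff_right.2 (hD i)
    have hgrow := one_sub_pow_mul_card_avoiding_le A hx₁ (disjoint_sdiff_inter S (Γ i))
      fun a ha T' hT' haT' => by
        rw [mem_inter] at ha
        refine ih _ ((ssubset_iff_of_subset (union_subset sdiff_subset
          (hT'.trans inter_subset_left))).2 ⟨a, ha.1, ?_⟩) ?_ <;>
        simp [ha.2, haT']
    rw [sdiff_union_inter] at hgrow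
    have hN₀ : (0 : ℝ) ≤ #(avoiding A (S \ Γ i)) := by positivity
    calc (#(A i ∩ avoiding A S) : ℝ)
        ≤ #(A i ∩ avoiding A (S \ Γ i)) := by
          exact_mod_cast card_le_card (inter_subset_inter_left (avoiding_anti A sdiff_subset))
      _ ≤ p * #(avoiding A (S \ Γ i)) := hcond i _ sdiff_disjoint
      _ ≤ x * ((1 - x) ^ D * #(avoiding A (S \ Γ i))) := by
          rw [← mul_assoc]; exact mul_le_mul_of_nonneg_right hp hN₀
      _ ≤ x * ((1 - x) ^ #(S ∩ Γ i) * #(avoiding A (S \ Γ i))) := by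
          gcongr x * (?_ * _)
          exact pow_le_pow_of_le_one (by linarith) (by linarith) hT
      _ ≤ x * #(avoiding A S) := by gcongr

lemma inv_exp_one_le_one_sub_inv_pow (D : ℕ) :
    (Real.exp 1)⁻¹ ≤ (1 - ((D : ℝ) + 1)⁻¹) ^ D := by
  rcases Nat.eq_zero_or_pos D with rfl | hD
  · simpa using inv_le_one_of_one_le₀ (Real.one_le_exp zero_le_one)
  have hD' : (0 : ℝ) < D := by exact_mod_cast hD
  have : 1 - ((D : ℝ) + 1)⁻¹ = (1 + (D : ℝ)⁻¹)⁻¹ := by field_simp; ring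
  rw [this, inv_pow]
  exact inv_anti₀ (by positivity) Real.one_add_inv_pow_le_exp

/-- `hcond` says that for uniformly random `ω`, `P(ω ∈ A i | ω ∉ A j for all j ∈ S) ≤ p`
whenever `S` misses `Γ i`. -/
theorem lopsided_local_lemma [Nonempty Ω] [Fintype ι] (Γ : ι → Finset ι)
    (hΓ : ∀ i, i ∈ Γ i) {D : ℕ} (hD₁ : 1 ≤ D) (hD : ∀ i, #(Γ i) ≤ D + 1) {p : ℝ}
    (hp : Real.exp 1 * p * (D + 1) ≤ 1)
    (hcond : ∀ i S, Disjoint S (Γ i) →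
      (#(A i ∩ avoiding A S) : ℝ) ≤ p * #(avoiding A S)) :
    ∃ ω, ∀ i, ω ∉ A i := by
  set x : ℝ := ((D : ℝ) + 1)⁻¹
  have hx₀ : 0 < x := by positivity
  have hx₁ : x < 1 := inv_lt_one_of_one_lt₀ (by norm_cast; omega)
  have hpx : p ≤ x * (1 - x) ^ D := calc
    p ≤ x * (Real.exp 1)⁻¹ := by
      rw [← mul_inv, ← one_div, le_div_iff₀ (by positivity)]
      linear_combination hp
    _ ≤ x * (1 - x) ^ D := by gcongr; exact inv_exp_one_le_one_sub_inv_pow D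
  have hgrow := one_sub_pow_mul_card_avoiding_le A hx₁.le (disjoint_empty_left univ)
    fun a _ T' _ haT' => card_inter_avoiding_le A Γ hΓ hD hx₀.le hx₁.le hpx hcond _
      (by simpa using haT')
  rw [avoiding_empty, empty_union, card_univ] at hgrow
  have hpos : (0 : ℝ) < (1 - x) ^ #(univ : Finset ι) * Fintype.card Ω :=
    mul_pos (pow_pos (sub_pos.2 hx₁) _) (by exact_mod_cast Fintype.card_pos)
  obtain ⟨ω, hω⟩ := card_pos.1 (by exact_mod_cast hpos.trans_le hgrow)
  exact ⟨ω, by simpa [avoiding] using hω⟩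

end LocalLemma

lemma card_mul_card_pow_le_of_rigid {α β : Type*} [Fintype α] [DecidableEq α] [Fintype β]
    [DecidableEq β] {P : Finset α} {A C : Finset (α → β)} (hAC : A ⊆ C)
    (hA : ∀ f ∈ A, ∀ g ∈ A, (∀ x ∉ P, f x = g x) → f = g)
    (hC : ∀ f ∈ C, ∀ g : α → β, (∀ x ∉ P, f x = g x) → g ∈ C) :
    #A * Fintype.card β ^ #P ≤ #C := by
  let F : (α → β) × (P → β) → α → β := fun q x =>
    if hx : x ∈ P then q.2 ⟨x, hx⟩ else q.1 x
  have hF : ∀ q x, x ∉ P → F q x = q.1 x := fun q x hx => dif_neg hx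
  calc #A * Fintype.card β ^ #P = #(A ×ˢ (univ : Finset (P → β))) := by simp
    _ ≤ #C := by
      refine card_le_card_of_injOn F
        (fun q hq => hC _ (hAC (mem_product.1 hq).1) _ fun x hx => (hF q x hx).symm) ?_
      rintro ⟨f, h⟩ hq ⟨f', h'⟩ hq' heq
      have hff' : f = f' := hA f (mem_product.1 hq).1 f' (mem_product.1 hq').1
        fun x hx => by simpa [hF _ x hx] using congrFun heq x
      have hhh' : h = h' := funext fun x => by simpa [F] using congrFun heq x
      rw [hff', hhh']

noncomputable def boolWeight {α : Type*} (f : α → Bool) (x : α) : ℝ := if f x then 2 else 1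

lemma boolWeight_mem {α : Type*} (f : α → Bool) (x : α) :
    boolWeight f x ∈ ({1, 2} : Set ℝ) := by
  unfold boolWeight
  split_ifs <;> simp

lemma boolWeight_eq_boolWeight_iff {α : Type*} {f g : α → Bool} {x : α} :
    boolWeight f x = boolWeight g x ↔ f x = g x := by
  unfold boolWeight
  cases f x <;> cases g x <;> norm_num

namespace SimpleGraph

variable {G : SimpleGraph V}

noncomputable def edgeTail (i : G.edgeSet) : V := (i : Sym2 V).out.1

noncomputable def edgeHead (i : G.edgeSet) : V := (i : Sym2 V).out.2

lemma mk_edgeTail_edgeHead (i : G.edgeSet) : s(edgeTail i, edgeHead i) = (i : Sym2 V) :=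
  Quot.out_eq _

lemma edgeTail_mem (i : G.edgeSet) : edgeTail i ∈ (i : Sym2 V) := Sym2.out_fst_mem _

lemma edgeHead_mem (i : G.edgeSet) : edgeHead i ∈ (i : Sym2 V) := Sym2.out_snd_mem _

lemma adj_edgeTail_edgeHead (i : G.edgeSet) : G.Adj (edgeTail i) (edgeHead i) := by
  rw [← mem_edgeSet, mk_edgeTail_edgeHead]
  exact i.2

variable [Fintype V] [DecidableEq V] (G) [DecidableRel G.Adj]

def incEdges (z : V) : Finset G.edgeSet := univ.filter fun e => z ∈ (e : Sym2 V)

lemma card_incEdges (z : V) : #(G.incEdges z) = G.degree z := by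
  rw [← card_incidenceFinset_eq_degree, ← card_map (Function.Embedding.subtype _)]
  congr 1
  ext e
  simp [incEdges, incidenceSet, and_comm]

def closedIncidence (z : V) : Finset (V ⊕ G.edgeSet) := ({z} : Finset V).disjSum (G.incEdges z)

variable {G}

@[simp]
lemma inl_mem_closedIncidence {u z : V} : Sum.inl u ∈ G.closedIncidence z ↔ u = z := by
  simp [closedIncidence]

@[simp]
lemma inr_mem_closedIncidence {e : G.edgeSet} {z : V} :
    Sum.inr e ∈ G.closedIncidence z ↔ z ∈ (e : Sym2 V) := by
  simp [closedIncidence, incEdges]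

lemma mem_incTotal {σ : LinearOrder (V ⊕ G.edgeSet)} {x : V ⊕ G.edgeSet} {z : V} :
    x ∈ incTotal G σ z ↔ x ∈ G.closedIncidence z := by
  cases x <;> simp [incTotal, eq_comm]

lemma totalSeqColor_boolWeight_eq_iff {σ : LinearOrder (V ⊕ G.edgeSet)}
    {f g : V ⊕ G.edgeSet → Bool} {z : V} :
    totalSeqColor G σ (boolWeight f) z = totalSeqColor G σ (boolWeight g) z ↔
      ∀ x ∈ G.closedIncidence z, f x = g x := by
  simp only [totalSeqColor, List.map_inj_left, mem_incTotal, boolWeight_eq_boolWeight_iff]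

lemma eq_inr_of_mem_closedIncidence_edgeTail_edgeHead {i : G.edgeSet} {x : V ⊕ G.edgeSet}
    (ht : x ∈ G.closedIncidence (edgeTail i)) (hh : x ∈ G.closedIncidence (edgeHead i)) :
    x = Sum.inr i := by
  cases x with
  | inl w =>
    rw [inl_mem_closedIncidence] at ht hh
    exact absurd (ht.symm.trans hh) (adj_edgeTail_edgeHead i).ne
  | inr e =>
    rw [inr_mem_closedIncidence] at ht hh
    rw [Subtype.ext ((Sym2.mem_and_mem_iff (adj_edgeTail_edgeHead i).ne).1 ⟨ht, hh⟩ |>.trans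
      (mk_edgeTail_edgeHead i))]

variable (G)

noncomputable def tailCoords (i : G.edgeSet) : Finset (V ⊕ G.edgeSet) :=
  (G.closedIncidence (edgeTail i)).erase (Sum.inr i)

lemma card_tailCoords (i : G.edgeSet) : #(G.tailCoords i) = G.degree (edgeTail i) := by
  have hi : Sum.inr i ∈ G.closedIncidence (edgeTail i) :=
    inr_mem_closedIncidence.2 (edgeTail_mem i)
  have hpos := G.degree_pos_iff_exists_adj (edgeTail i) |>.2 ⟨_, adj_edgeTail_edgeHead i⟩
  rw [tailCoords, card_erase_of_mem hi, closedIncidence, card_disjSum, card_singleton,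
    card_incEdges]
  omega

noncomputable def sameColorEvent (σ : LinearOrder (V ⊕ G.edgeSet)) (i : G.edgeSet) :
    Finset (V ⊕ G.edgeSet → Bool) :=
  univ.filter fun f =>
    totalSeqColor G σ (boolWeight f) (edgeTail i) = totalSeqColor G σ (boolWeight f) (edgeHead i)

noncomputable def dependents (i : G.edgeSet) : Finset G.edgeSet :=
  univ.filter fun j => ∃ z ∈ (j : Sym2 V), ¬Disjoint (G.closedIncidence z) (G.tailCoords i)

lemma mem_dependents_self (i : G.edgeSet) : i ∈ G.dependents i :=
  mem_filter.2 ⟨mem_univ _, edgeTail i, edgeTail_mem i,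
    not_disjoint_iff.2 ⟨Sum.inl (edgeTail i), by simp, by simp [tailCoords]⟩⟩

lemma mem_insert_biUnion_of_edgeTail_mem {i j : G.edgeSet} (h : edgeTail i ∈ (j : Sym2 V)) :
    j ∈ insert i (((G.neighborFinset (edgeTail i)).erase (edgeHead i)).biUnion G.incEdges) := by
  have hj : s(edgeTail i, Sym2.Mem.other h) = j := Sym2.other_spec h
  have hadj : G.Adj (edgeTail i) (Sym2.Mem.other h) := by
    rw [← mem_edgeSet, hj]
    exact j.2
  by_cases hhead : Sym2.Mem.other h = edgeHead i
  · rw [hhead, mk_edgeTail_edgeHead] at hj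
    exact mem_insert.2 (Or.inl (Subtype.ext hj.symm))
  · exact mem_insert_of_mem (mem_biUnion.2
      ⟨_, mem_erase.2 ⟨hhead, (mem_neighborFinset _ _ _).2 hadj⟩,
        mem_filter.2 ⟨mem_univ _, Sym2.other_mem h⟩⟩)

lemma dependents_subset (i : G.edgeSet) :
    G.dependents i ⊆
      insert i (((G.neighborFinset (edgeTail i)).erase (edgeHead i)).biUnion G.incEdges) := by
  intro j hj
  obtain ⟨z, hz, hx⟩ := (mem_filter.1 hj).2
  obtain ⟨x, hxz, hxi⟩ := not_disjoint_iff.1 hx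
  rw [tailCoords, mem_erase] at hxi
  cases x with
  | inl w =>
    rw [inl_mem_closedIncidence] at hxz hxi
    exact G.mem_insert_biUnion_of_edgeTail_mem (hxi.2 ▸ hxz ▸ hz)
  | inr e =>
    obtain ⟨hei, hte⟩ := hxi
    rw [inr_mem_closedIncidence] at hxz hte
    by_cases hzt : z = edgeTail i
    · exact G.mem_insert_biUnion_of_edgeTail_mem (hzt ▸ hz)
    have he : (e : Sym2 V) = s(edgeTail i, z) :=
      (Sym2.mem_and_mem_iff (Ne.symm hzt)).1 ⟨hte, hxz⟩
    have hadj : G.Adj (edgeTail i) z := by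
      rw [← mem_edgeSet, ← he]
      exact e.2
    have hzh : z ≠ edgeHead i := by
      rintro rfl
      exact hei (congrArg _ (Subtype.ext (he.trans (mk_edgeTail_edgeHead i))))
    exact mem_insert_of_mem (mem_biUnion.2
      ⟨z, mem_erase.2 ⟨hzh, (mem_neighborFinset _ _ _).2 hadj⟩, mem_filter.2 ⟨mem_univ _, hz⟩⟩)

lemma card_dependents_le (i : G.edgeSet) :
    #(G.dependents i) ≤ (G.maxDegree - 1) * G.maxDegree + 1 := by
  have hN : #((G.neighborFinset (edgeTail i)).erase (edgeHead i)) ≤ G.maxDegree - 1 := by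
    rw [card_erase_of_mem ((mem_neighborFinset _ _ _).2 (adj_edgeTail_edgeHead i)),
      card_neighborFinset_eq_degree]
    exact Nat.sub_le_sub_right (G.degree_le_maxDegree _) 1
  calc #(G.dependents i)
      ≤ #(insert i (((G.neighborFinset (edgeTail i)).erase (edgeHead i)).biUnion G.incEdges)) :=
        card_le_card (G.dependents_subset i)
    _ ≤ #(((G.neighborFinset (edgeTail i)).erase (edgeHead i)).biUnion G.incEdges) + 1 :=
        card_insert_le _ _
    _ ≤ (G.maxDegree - 1) * G.maxDegree + 1 := by
        gcongr
        refine (card_biUnion_le_card_mul _ _ _ fun z _ => ?_).trans (Nat.mul_le_mul_right _ hN)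
        rw [card_incEdges]
        exact G.degree_le_maxDegree z

variable {G}

lemma mem_sameColorEvent_congr {σ : LinearOrder (V ⊕ G.edgeSet)} {i j : G.edgeSet}
    (hj : j ∉ G.dependents i) {f g : V ⊕ G.edgeSet → Bool}
    (hfg : ∀ x ∉ G.tailCoords i, f x = g x) :
    f ∈ G.sameColorEvent σ j ↔ g ∈ G.sameColorEvent σ j := by
  have key : ∀ z ∈ (j : Sym2 V),
      totalSeqColor G σ (boolWeight f) z = totalSeqColor G σ (boolWeight g) z :=
    fun z hz => totalSeqColor_boolWeight_eq_iff.2 fun x hx => hfg x fun hxi =>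
      hj (mem_filter.2 ⟨mem_univ _, z, hz, not_disjoint_iff.2 ⟨x, hx, hxi⟩⟩)
  simp only [sameColorEvent, mem_filter, mem_univ, true_and, key _ (edgeTail_mem j),
    key _ (edgeHead_mem j)]

lemma eq_of_mem_sameColorEvent {σ : LinearOrder (V ⊕ G.edgeSet)} {i : G.edgeSet}
    {f g : V ⊕ G.edgeSet → Bool} (hf : f ∈ G.sameColorEvent σ i)
    (hg : g ∈ G.sameColorEvent σ i)
    (hfg : ∀ x ∉ G.tailCoords i, f x = g x) : f = g := by
  simp only [sameColorEvent, mem_filter, mem_univ, true_and] at hf hg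
  have hhead := totalSeqColor_boolWeight_eq_iff (σ := σ) (z := edgeHead i).2 fun x hx =>
    hfg x fun hxi =>
      (mem_erase.1 hxi).1 (eq_inr_of_mem_closedIncidence_edgeTail_edgeHead (mem_erase.1 hxi).2 hx)
  have htail := totalSeqColor_boolWeight_eq_iff.1 (hf.trans (hhead.trans hg.symm))
  funext x
  by_cases hx : x ∈ G.tailCoords i
  · exact htail x (mem_of_mem_erase hx)
  · exact hfg x hx

lemma card_sameColorEvent_inter_avoiding_mul_le (σ : LinearOrder (V ⊕ G.edgeSet))
    {i : G.edgeSet} {S : Finset G.edgeSet} (hS : Disjoint S (G.dependents i)) :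
    #(G.sameColorEvent σ i ∩ avoiding (G.sameColorEvent σ) S) * 2 ^ G.minDegree ≤
      #(avoiding (G.sameColorEvent σ) S) := by
  have h := card_mul_card_pow_le_of_rigid (P := G.tailCoords i)
    (A := G.sameColorEvent σ i ∩ avoiding (G.sameColorEvent σ) S) inter_subset_right
    (fun f hf g hg => eq_of_mem_sameColorEvent (mem_inter.1 hf).1 (mem_inter.1 hg).1)
    (fun f hf g hfg => by
      simp only [avoiding, mem_filter, mem_univ, true_and] at hf ⊢
      exact fun j hj =>
        (mem_sameColorEvent_congr (Finset.disjoint_left.1 hS hj) hfg).not.1 (hf j hj))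
  rw [Fintype.card_bool, card_tailCoords] at h
  exact (Nat.mul_le_mul_left _ (Nat.pow_le_pow_right two_pos (G.minDegree_le_degree _))).trans h

lemma properTotalSeq_boolWeight {σ : LinearOrder (V ⊕ G.edgeSet)} {f : V ⊕ G.edgeSet → Bool}
    (hf : ∀ i, f ∉ G.sameColorEvent σ i) : ProperTotalSeq G σ (boolWeight f) := by
  intro a b hab h
  have hend : s(edgeTail (G := G) ⟨s(a, b), G.mem_edgeSet.2 hab⟩,
      edgeHead (G := G) ⟨s(a, b), G.mem_edgeSet.2 hab⟩) = s(a, b) := mk_edgeTail_edgeHead _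
  apply hf ⟨s(a, b), G.mem_edgeSet.2 hab⟩
  rw [sameColorEvent, mem_filter]
  rcases Sym2.eq_iff.1 hend with ⟨ha, hb⟩ | ⟨ha, hb⟩ <;> rw [ha, hb]
  exacts [⟨mem_univ _, h⟩, ⟨mem_univ _, h.symm⟩]

end SimpleGraph

lemma SimpleGraph.two_le_maxDegree_of_exp_one_mul_lt [Fintype V] (G : SimpleGraph V)
    [DecidableRel G.Adj]
    (h : Real.exp 1 * ((G.maxDegree : ℝ) ^ 2 - G.maxDegree + 1) < 2 ^ G.minDegree) :
    2 ≤ G.maxDegree := by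
  by_contra! hΔ
  have hδ : (2 : ℝ) ^ G.minDegree ≤ 2 ^ 1 :=
    pow_le_pow_right₀ one_le_two (by have := G.minDegree_le_maxDegree; omega)
  obtain hΔ | hΔ : G.maxDegree = 0 ∨ G.maxDegree = 1 := by omega
  all_goals
    rw [hΔ] at h
    norm_num at h hδ
    linarith [Real.exp_one_gt_d9]

theorem stmt_14_general [Fintype V] [DecidableEq V] (G : SimpleGraph V) [DecidableRel G.Adj]
    (hδ : Real.logb 2 (Real.exp 1 * ((G.maxDegree : ℝ) ^ 2 - (G.maxDegree : ℝ) + 1))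
      < (G.minDegree : ℝ))
    (σ : LinearOrder (V ⊕ G.edgeSet)) :
    ∃ w : V ⊕ G.edgeSet → ℝ, (∀ x, w x ∈ ({1, 2} : Set ℝ)) ∧ ProperTotalSeq G σ w := by
  have hlt : Real.exp 1 * ((G.maxDegree : ℝ) ^ 2 - G.maxDegree + 1) < 2 ^ G.minDegree := by
    have hpos : (0 : ℝ) < (G.maxDegree : ℝ) ^ 2 - G.maxDegree + 1 := by
      nlinarith [sq_nonneg ((G.maxDegree : ℝ) - 1 / 2)]
    rwa [Real.logb_lt_iff_lt_rpow one_lt_two (by positivity), Real.rpow_natCast] at hδ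
  have hΔ := G.two_le_maxDegree_of_exp_one_mul_lt hlt
  have hp : Real.exp 1 * ((2 : ℝ) ^ G.minDegree)⁻¹ *
      (((G.maxDegree - 1) * G.maxDegree : ℕ) + 1) ≤ 1 := by
    rw [mul_comm (Real.exp 1), mul_assoc, inv_mul_le_one₀ (by positivity)]
    push_cast [Nat.cast_sub (by omega : 1 ≤ G.maxDegree)]
    linear_combination hlt.le
  obtain ⟨f, hf⟩ := lopsided_local_lemma (G.sameColorEvent σ) G.dependents
    G.mem_dependents_self (Nat.mul_pos (by omega) (by omega))
    G.card_dependents_le hp fun i S hS => by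
      rw [← div_eq_inv_mul, le_div_iff₀ (by positivity)]
      exact_mod_cast SimpleGraph.card_sameColorEvent_inter_avoiding_mul_le σ hS
  exact ⟨boolWeight f, boolWeight_mem f, SimpleGraph.properTotalSeq_boolWeight hf⟩

/-- If `G` has girth at least `5` and `δ(G) > log₂(e·(Δ(G)² − Δ(G) + 1))`, then
`χ_σ^t(G) ≤ 2`. -/
theorem stmt_14 [Fintype V] [DecidableEq V] (G : SimpleGraph V) [DecidableRel G.Adj]
    (hgirth : 5 ≤ G.egirth)
    (hδ : Real.logb 2 (Real.exp 1 * ((G.maxDegree : ℝ) ^ 2 - (G.maxDegree : ℝ) + 1))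
      < (G.minDegree : ℝ))
    (σ : LinearOrder (V ⊕ G.edgeSet)) :
    ∃ w : V ⊕ G.edgeSet → ℝ, (∀ x, w x ∈ ({1, 2} : Set ℝ)) ∧ ProperTotalSeq G σ w :=
  stmt_14_general G hδ σ
end

section
/- Let n and k be integers with k ≥ 2, and let G be a finite simple graph on n vertices with minimum degree δ satisfying δ > log_k((e/2)(n+1)² + 1) + 1, where e is Euler's number. Then ls_σ^e(G) ≤ k: for every linear order on E(G) and every assignment to each edge of a set of k real numbers, there exists a weighting taking each edge's weight from its assigned set such that all vertices of G receive pairwise distinct induced sequences. -/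
/-!
Common definitions: sequence colourings induced by an edge weighting and a linear
order on the edge set of a finite simple graph.
-/

open Finset

variable {V : Type*}

/-- The list of edges incident to `v`, sorted in increasing order with respect to the
linear order `σ` on `E(G)`. -/
noncomputable def incEdges [Fintype V] [DecidableEq V] (G : SimpleGraph V) [DecidableRel G.Adj]
    (σ : LinearOrder G.edgeSet) (v : V) : List G.edgeSet :=
  letI := σ
  ((Finset.univ : Finset G.edgeSet).filter (fun e : G.edgeSet => v ∈ (e : Sym2 V))).sort σ.le

/-- The induced sequence colouring: `c(v)` is the list of weights `w(e)` of the edges `e`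
incident to `v`, written in increasing order of `e` with respect to `σ`. -/
noncomputable def seqColor [Fintype V] [DecidableEq V] (G : SimpleGraph V) [DecidableRel G.Adj]
    (σ : LinearOrder G.edgeSet) {α : Type*} (w : G.edgeSet → α) (v : V) : List α :=
  (incEdges G σ v).map w

/-- The induced sequence colouring is proper: adjacent vertices receive distinct sequences. -/
def ProperSeq [Fintype V] [DecidableEq V] (G : SimpleGraph V) [DecidableRel G.Adj]
    (σ : LinearOrder G.edgeSet) (w : G.edgeSet → ℝ) : Prop :=
  ∀ u v : V, G.Adj u v → seqColor G σ w u ≠ seqColor G σ w v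

/-! The proof is a counting argument. If a weighting gives `u ≠ v` the same sequence, the `i`-th
edge at `u` carries the same weight as the `i`-th edge at `v`, which is incident to `v`; so such a
weighting is determined by its values off the at least `δ - 1` edges at `u` avoiding `v`. Hence at
most `k ^ (|E| - δ + 1)` of the `k ^ |E|` admissible weightings make a given pair collide, and
`n² < k ^ (δ - 1)` by the degree assumption leaves a weighting with no collision at all. -/

theorem List.exists_mem_forall_map_eq_map {β : Type*} (γ : Type*) {l₁ l₂ : List β}
    (hlen : l₁.length = l₂.length) {a : β} (ha : a ∈ l₁) :
    ∃ b ∈ l₂, ∀ f : β → γ, l₁.map f = l₂.map f → f a = f b := by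
  obtain ⟨i, hi, rfl⟩ := List.mem_iff_getElem.mp ha
  refine ⟨l₂[i], List.getElem_mem _, fun f hf => ?_⟩
  simpa using (List.getElem_map f).symm.trans (List.getElem_of_eq hf (by simpa using hi))

theorem Finset.exists_mem_forall_not_of_sum_card_filter_lt {α ι : Type*} (A : Finset α)
    (s : Finset ι) (P : ι → α → Prop) [∀ i, DecidablePred (P i)]
    (h : ∑ i ∈ s, #(A.filter (P i)) < #A) : ∃ a ∈ A, ∀ i ∈ s, ¬ P i a := by
  classical
  by_contra! hall
  have hcover : A ⊆ s.biUnion fun i => A.filter (P i) := fun a ha => by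
    obtain ⟨i, hi, hPi⟩ := hall a ha
    exact mem_biUnion.2 ⟨i, hi, mem_filter.2 ⟨ha, hPi⟩⟩
  exact (card_le_card hcover |>.trans card_biUnion_le).not_gt h

theorem Finset.card_mul_pow_card_le_of_injOn_restrict {ι β : Type*} [Fintype ι] [DecidableEq ι]
    {L : ι → Finset β} {k : ℕ} (hL : ∀ i, #(L i) = k) (S : Finset ι)
    {X : Finset (ι → β)} (hX : X ⊆ Fintype.piFinset L)
    (hinj : ∀ x ∈ X, ∀ y ∈ X, (∀ i ∉ S, x i = y i) → x = y) :
    #X * k ^ #S ≤ k ^ Fintype.card ι := by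
  have hrestrict : #X ≤ k ^ (Fintype.card ι - #S) := calc
    #X ≤ #(Fintype.piFinset fun i : {i // i ∉ S} => L i) := by
      refine card_le_card_of_injOn (fun x i => x i) (fun x hx => ?_) fun x hx y hy hxy => ?_
      · simpa using fun i _ => Fintype.mem_piFinset.1 (hX hx) i
      · exact hinj x hx y hy fun i hi => congrFun hxy ⟨i, hi⟩
    _ = k ^ (Fintype.card ι - #S) := by
      simp [Fintype.card_piFinset, hL, Fintype.card_subtype_compl]
  calc #X * k ^ #S ≤ k ^ (Fintype.card ι - #S) * k ^ #S := Nat.mul_le_mul_right _ hrestrict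
    _ = k ^ Fintype.card ι := by rw [← pow_add, Nat.sub_add_cancel (card_le_univ S)]

theorem mul_self_lt_pow_of_logb_lt {n k δ : ℕ} (hk : 1 < k)
    (h : Real.logb k (Real.exp 1 / 2 * ((n : ℝ) + 1) ^ 2 + 1) + 1 < δ) :
    n * n < k ^ (δ - 1) := by
  have hk' : (1 : ℝ) < k := by exact_mod_cast hk
  have he : (1 : ℝ) ≤ Real.exp 1 / 2 := by linarith [Real.add_one_le_exp 1]
  have hsq : (n : ℝ) * n < Real.exp 1 / 2 * ((n : ℝ) + 1) ^ 2 + 1 := by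
    nlinarith [sq_nonneg ((n : ℝ) + 1)]
  have hlog : 0 ≤ Real.logb k (Real.exp 1 / 2 * ((n : ℝ) + 1) ^ 2 + 1) :=
    Real.logb_nonneg hk' (by nlinarith [sq_nonneg ((n : ℝ) + 1)])
  have hδ : 0 < δ := by exact_mod_cast (show (0 : ℝ) < δ by linarith)
  have hlt := (Real.logb_lt_iff_lt_rpow hk' (by positivity)).1 (lt_sub_iff_add_lt.2 h)
  rw [← Nat.cast_pred hδ, Real.rpow_natCast] at hlt
  exact_mod_cast hsq.trans hlt

section SeqColor

variable [Fintype V] [DecidableEq V] (G : SimpleGraph V) [DecidableRel G.Adj]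

theorem SimpleGraph.card_filter_mem_edgeSet_eq_degree (u : V) :
    #(univ.filter fun e : G.edgeSet => u ∈ (e : Sym2 V)) = G.degree u := by
  rw [← card_incidenceFinset_eq_degree, ← card_map (Function.Embedding.subtype _)]
  congr 1
  ext e
  simp [incidenceSet, and_comm]

theorem SimpleGraph.degree_sub_one_le_card_edges_mem_notMem {u v : V} (huv : u ≠ v) :
    G.degree u - 1 ≤
      #(univ.filter fun e : G.edgeSet => u ∈ (e : Sym2 V) ∧ v ∉ (e : Sym2 V)) := by
  set I := univ.filter fun e : G.edgeSet => u ∈ (e : Sym2 V)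
  have hsplit := card_filter_add_card_filter_not (s := I) fun e : G.edgeSet => v ∈ (e : Sym2 V)
  have hboth : #(I.filter fun e : G.edgeSet => v ∈ (e : Sym2 V)) ≤ 1 :=
    card_le_one.2 fun a ha b hb => by
      simp only [I, mem_filter] at ha hb
      exact Subtype.ext (Sym2.eq_of_ne_mem huv ha.1.2 ha.2 hb.1.2 hb.2)
  rw [G.card_filter_mem_edgeSet_eq_degree] at hsplit
  simp only [I, filter_filter] at hsplit hboth
  omega

variable (σ : LinearOrder G.edgeSet)

theorem mem_incEdges {x : V} {e : G.edgeSet} : e ∈ incEdges G σ x ↔ x ∈ (e : Sym2 V) := by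
  let := σ
  simp [incEdges]

theorem eq_of_seqColor_eq_of_agree {α : Type*} {u v : V} {w w' : G.edgeSet → α}
    (hw : seqColor G σ w u = seqColor G σ w v) (hw' : seqColor G σ w' u = seqColor G σ w' v)
    (hagree : ∀ e : G.edgeSet, ¬(u ∈ (e : Sym2 V) ∧ v ∉ (e : Sym2 V)) → w e = w' e) :
    w = w' := by
  funext e
  by_cases he : u ∈ (e : Sym2 V) ∧ v ∉ (e : Sym2 V)
  · have hlen : (incEdges G σ u).length = (incEdges G σ v).length := by
      simpa [seqColor] using congrArg List.length hw
    obtain ⟨e', he', hpartner⟩ :=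
      List.exists_mem_forall_map_eq_map α hlen ((mem_incEdges G σ).2 he.1)
    rw [hpartner w hw, hagree e' fun h => h.2 ((mem_incEdges G σ).1 he'), ← hpartner w' hw']
  · exact hagree e he

theorem card_filter_seqColor_eq_mul_pow_le {β : Type*} [DecidableEq β]
    {L : G.edgeSet → Finset β} {k : ℕ} (hk : 0 < k) (hL : ∀ e, #(L e) = k) {u v : V}
    (huv : u ≠ v) :
    #((Fintype.piFinset L).filter fun w => seqColor G σ w u = seqColor G σ w v) *
      k ^ (G.minDegree - 1) ≤ k ^ Fintype.card G.edgeSet := by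
  set S := univ.filter fun e : G.edgeSet => u ∈ (e : Sym2 V) ∧ v ∉ (e : Sym2 V)
  have hS : G.minDegree - 1 ≤ #S :=
    (Nat.sub_le_sub_right (G.minDegree_le_degree u) 1).trans
      (G.degree_sub_one_le_card_edges_mem_notMem huv)
  calc _ ≤ #((Fintype.piFinset L).filter fun w => seqColor G σ w u = seqColor G σ w v) *
          k ^ #S :=
        Nat.mul_le_mul_left _ (Nat.pow_le_pow_right hk hS)
    _ ≤ k ^ Fintype.card G.edgeSet :=
        card_mul_pow_card_le_of_injOn_restrict hL S (filter_subset _ _)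
          fun x hx y hy hxy => eq_of_seqColor_eq_of_agree G σ (mem_filter.1 hx).2
            (mem_filter.1 hy).2 fun e he => hxy e (by simpa [S] using he)

end SeqColor

/-- If `k ≥ 2` and `G` is a graph on `n` vertices with
`δ(G) > log_k((e/2)(n+1)² + 1) + 1`, then `ls_σ^e(G) ≤ k`. -/
theorem stmt_19 [Fintype V] [DecidableEq V] (G : SimpleGraph V) [DecidableRel G.Adj]
    (n k : ℕ) (hk : 2 ≤ k) (hn : Fintype.card V = n)
    (hδ : Real.logb k (Real.exp 1 / 2 * ((n : ℝ) + 1) ^ 2 + 1) + 1 < (G.minDegree : ℝ))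
    (σ : LinearOrder G.edgeSet)
    (L : G.edgeSet → Finset ℝ) (hL : ∀ e, (L e).card = k) :
    ∃ w : G.edgeSet → ℝ, (∀ e, w e ∈ L e) ∧
      ∀ u v : V, u ≠ v → seqColor G σ w u ≠ seqColor G σ w v := by
  set m := Fintype.card G.edgeSet
  set d := G.minDegree - 1
  have hA : #(Fintype.piFinset L) = k ^ m := by simp [Fintype.card_piFinset, hL, m]
  have hpairs : #(univ : Finset V).offDiag ≤ n * n := by
    rw [offDiag_card, card_univ, hn]
    exact Nat.sub_le _ _
  have hbad : ∑ p ∈ (univ : Finset V).offDiag,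
      #((Fintype.piFinset L).filter fun w => seqColor G σ w p.1 = seqColor G σ w p.2) <
        #(Fintype.piFinset L) := by
    refine Nat.lt_of_mul_lt_mul_right (a := k ^ d) ?_
    calc _ ≤ ∑ _p ∈ (univ : Finset V).offDiag, k ^ m := by
          rw [sum_mul]
          exact sum_le_sum fun p hp =>
            card_filter_seqColor_eq_mul_pow_le G σ (by omega) hL (mem_offDiag.1 hp).2.2
      _ ≤ n * n * k ^ m := by
          rw [sum_const, smul_eq_mul]
          exact Nat.mul_le_mul_right _ hpairs
      _ < k ^ d * k ^ m :=
          Nat.mul_lt_mul_of_pos_right (mul_self_lt_pow_of_logb_lt (by omega) hδ) (by positivity)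
      _ = _ := by rw [hA, mul_comm]
  obtain ⟨w, hwL, hw⟩ := exists_mem_forall_not_of_sum_card_filter_lt _ _ _ hbad
  exact ⟨w, Fintype.mem_piFinset.1 hwL, fun u v huv => hw (u, v) (by simpa using huv)⟩
end
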